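/- Fix an integer D ≥ 2. If the 3CNF formula f has a satisfying assignment, then the split graph G_D(f) admits a (2n,D)-coloring. -/
import Mathlib


/-- The deficiency of a vertex `v` under a coloring `c`: the number of neighbors
of `v` whose color equals `c v`. -/
noncomputable def deficiency {V α : Type*} (G : SimpleGraph V) (c : V → α) (v : V) : ℕ :=
  {w | G.Adj v w ∧ c w = c v}.ncard

/-- `c` is a `(C,D)`-coloring (with colors `Fin C`): every vertex has at most `D`
neighbors of its own color. -/
def IsDefColoring {V α : Type*} (G : SimpleGraph V) (D : ℕ) (c : V → α) : Prop :=
  ∀ v, deficiency G c v ≤ D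

/-- A 3CNF formula with `n` variables and `m` clauses: each clause `j` consists of three
literals `lit j 0, lit j 1, lit j 2`, a literal being a pair of a variable index and a
Boolean (`true` for a positive occurrence), over pairwise distinct variables. -/
structure CNF3 (n m : ℕ) where
  lit : Fin m → Fin 3 → Fin n × Bool
  distinct : ∀ j : Fin m, Function.Injective (fun a => (lit j a).1)

/-- `s` satisfies `f`: every clause contains a literal made true by `s`. -/
def CNF3.Satisfies {n m : ℕ} (f : CNF3 n m) (s : Fin n → Bool) : Prop :=
  ∀ j : Fin m, ∃ a : Fin 3, s (f.lit j a).1 = (f.lit j a).2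

/-- Vertices of the split graph `G_D(f)`: clique vertices `u_i^k` (`k ∈ {A,B,C,D}`
encoded as `Fin 4` with `A=0, B=1, C=2, D=3`) together with the extra clique vertices of
`U_i^A` (tagged `false`) and `U_i^D` (tagged `true`), each of size `D-1`; and
independent-set vertices `z_i^A` (tagged `false`), `z_i^D` (tagged `true`) and `v_j`. -/
abbrev SatVtxD (n m D : ℕ) :=
  ((Fin n × Fin 4) ⊕ (Fin n × Bool × Fin (D - 1))) ⊕ ((Fin n × Bool) ⊕ Fin m)

/-- The edges of `G_D(f)`, oriented from the clique side: `U` is a clique, `Z` is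
independent; `z_i^A` (resp. `z_i^D`) is non-adjacent exactly to the vertices
`u_i^{kᵒ}, kᵒ ≠ A` (resp. `kᵒ ≠ D`) of its own quadruple and to `U_i^D` (resp. `U_i^A`);
`v_j` is non-adjacent to `u_i^A, u_i^B` (resp. `u_i^A, u_i^C`) when `x_i` occurs
positively (resp. negatively) in clause `j`, and to all of `U_i^A` whenever clause `j`
contains variable `x_i`; all other `U`–`Z` edges are present. -/
def satRelD {n m : ℕ} (f : CNF3 n m) (D : ℕ) :
    SatVtxD n m D → SatVtxD n m D → Prop
  | Sum.inl _, Sum.inl _ => True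
  | Sum.inl (Sum.inl (i, k)), Sum.inr (Sum.inl (iz, b)) =>
      i ≠ iz ∨ k = (if b then 3 else 0)
  | Sum.inl (Sum.inl (i, k)), Sum.inr (Sum.inr j) =>
      ¬ ∃ a : Fin 3, (f.lit j a).1 = i ∧
        (((f.lit j a).2 = true ∧ (k = 0 ∨ k = 1)) ∨
         ((f.lit j a).2 = false ∧ (k = 0 ∨ k = 2)))
  | Sum.inl (Sum.inr (i, b, _)), Sum.inr (Sum.inl (iz, bz)) => i ≠ iz ∨ b = bz
  | Sum.inl (Sum.inr (i, b, _)), Sum.inr (Sum.inr j) =>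
      b = true ∨ ¬ ∃ a : Fin 3, (f.lit j a).1 = i
  | Sum.inr _, _ => False

/-- The split graph `G_D(f)`. -/
def satGraphD {n m : ℕ} (f : CNF3 n m) (D : ℕ) : SimpleGraph (SatVtxD n m D) :=
  SimpleGraph.fromRel (satRelD f D)

def satCol {n m : ℕ} (D : ℕ) (f : CNF3 n m) (s : Fin n → Bool) (a : Fin m → Fin 3) :
    SatVtxD n m D → Fin n × Bool
  | .inl (.inl (i, k)) =>
      (i, if k = 0 then false else if k = 3 then true else if k = 1 then !(s i) else s i)
  | .inl (.inr (i, b, _)) => (i, b)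
  | .inr (.inl (i, b)) => (i, !b)
  | .inr (.inr j) => ((f.lit j (a j)).1, false)

lemma satCol_notRel {n m D : ℕ} (f : CNF3 n m) (s : Fin n → Bool) (a : Fin m → Fin 3)
    (ha : ∀ j, s (f.lit j (a j)).1 = (f.lit j (a j)).2)
    (u : (Fin n × Fin 4) ⊕ (Fin n × Bool × Fin (D - 1)))
    (z : (Fin n × Bool) ⊕ Fin m)
    (hc : satCol D f s a (.inl u) = satCol D f s a (.inr z)) :
    ¬ satRelD f D (.inl u) (.inr z) := by
  rcases u with ⟨i, k⟩ | ⟨i, b, t⟩ <;> rcases z with ⟨iz, bz⟩ | j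
  · simp only [satCol, Prod.mk.injEq] at hc
    obtain ⟨rfl, hc2⟩ := hc
    simp only [satRelD, ne_eq, not_or, not_not]
    refine ⟨by simp, ?_⟩
    fin_cases k <;> cases bz <;> simp_all
  · simp only [satCol, Prod.mk.injEq] at hc
    obtain ⟨h1, hc2⟩ := hc
    simp only [satRelD, not_not]
    refine ⟨a j, h1.symm, ?_⟩
    have := ha j
    rw [← h1] at this
    fin_cases k <;> cases hsi : s i <;> rw [hsi] at this hc2 <;> simp_all
  · simp only [satCol, Prod.mk.injEq] at hc
    obtain ⟨rfl, rfl⟩ := hc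
    simp [satRelD]
  · simp only [satCol, Prod.mk.injEq] at hc
    obtain ⟨h1, rfl⟩ := hc
    simp only [satRelD, not_or, not_not]
    exact ⟨by simp, ⟨a j, h1.symm⟩⟩

def satCls {n m : ℕ} (D : ℕ) (s : Fin n → Bool) (p : Fin n × Bool) :
    Finset (SatVtxD n m D) :=
  {.inl (.inl (p.1, if p.2 then 3 else 0)), .inl (.inl (p.1, if p.2 = s p.1 then 2 else 1))}
    ∪ Finset.image (fun t => .inl (.inr (p.1, p.2, t))) Finset.univ

lemma satCls_card {n m D : ℕ} (hD : 2 ≤ D) (s : Fin n → Bool) (p : Fin n × Bool) :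
    (satCls (n := n) (m := m) D s p).card = D + 1 := by
  rw [satCls, Finset.card_union_of_disjoint]
  · rw [Finset.card_image_of_injective _ (by intro x y hxy; simpa using hxy)]
    rw [Finset.card_pair (by obtain ⟨i, b⟩ := p; cases b <;> cases hs : s i <;> simp_all)]
    simp only [Finset.card_univ, Fintype.card_fin]
    omega
  · simp [Finset.disjoint_left]

lemma mem_satCls {n m D : ℕ} (s : Fin n → Bool) (f : CNF3 n m) (a : Fin m → Fin 3)
    (u : (Fin n × Fin 4) ⊕ (Fin n × Bool × Fin (D - 1))) (p : Fin n × Bool)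
    (hc : satCol D f s a (.inl u) = p) :
    (.inl u : SatVtxD n m D) ∈ satCls D s p := by
  subst hc
  rcases u with ⟨i, k⟩ | ⟨i, b, t⟩
  · fin_cases k <;> cases hsi : s i <;> simp [satCls, satCol, hsi]
  · simp [satCls, satCol]

lemma deficiency_comp' {V α β : Type*} (G : SimpleGraph V) (c : V → α) (e : α → β)
    (he : Function.Injective e) (v : V) :
    deficiency G (e ∘ c) v = deficiency G c v := by
  unfold deficiency
  congr 1
  ext w
  simp [he.eq_iff]

theorem stmt15' {n m : ℕ} (D : ℕ) (hD : 2 ≤ D) (f : CNF3 n m)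
    (h : ∃ s : Fin n → Bool, ∀ j : Fin m, ∃ a : Fin 3, s (f.lit j a).1 = (f.lit j a).2) :
    ∃ c : SatVtxD n m D → Fin (2 * n),
      ∀ v, deficiency (SimpleGraph.fromRel (satRelD f D)) c v ≤ D := by
  obtain ⟨s, hs⟩ := h
  choose a ha using hs
  have hnz : ∀ p : Fin n × Bool, 2 * p.1.val + (if p.2 then 1 else 0) < 2 * n := by
    intro p; have := p.1.isLt; split <;> omega
  set e : Fin n × Bool → Fin (2 * n) := fun p => ⟨_, hnz p⟩ with hedef
  have hei : Function.Injective e := by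
    rintro ⟨⟨i, hi⟩, b⟩ ⟨⟨i', hi'⟩, b'⟩ hpq
    simp only [hedef, Fin.mk.injEq] at hpq
    cases b <;> cases b' <;> simp_all [Prod.ext_iff, Fin.ext_iff] <;> omega
  refine ⟨e ∘ satCol D f s a, fun v => ?_⟩
  rw [deficiency_comp' _ _ _ hei]
  set G := SimpleGraph.fromRel (satRelD f D) with hG
  match v with
  | .inr z =>
      have hemp : {w | G.Adj (.inr z) w ∧ satCol D f s a w = satCol D f s a (.inr z)} = ∅ := by
        ext w
        simp only [Set.mem_setOf_eq, Set.mem_empty_iff_false, iff_false, not_and]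
        intro hadj hcol
        rw [hG, SimpleGraph.fromRel_adj] at hadj
        rcases w with u | z'
        · exact satCol_notRel f s a ha u z hcol (hadj.2.resolve_left (fun hh => hh))
        · exact hadj.2.elim (fun hh => hh) (fun hh => hh)
      unfold deficiency
      rw [hemp]
      simp
  | .inl u =>
      have hsub : {w | G.Adj (.inl u) w ∧ satCol D f s a w = satCol D f s a (.inl u)}
          ⊆ ↑((satCls (n := n) (m := m) D s (satCol D f s a (.inl u))).erase (.inl u)) := by
        rintro w ⟨hadj, hcol⟩
        simp only [Finset.coe_erase, Set.mem_diff, Finset.mem_coe, Set.mem_singleton_iff]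
        refine ⟨?_, fun hww => G.irrefl (hww ▸ hadj)⟩
        rcases w with u' | z
        · exact mem_satCls s f a u' _ hcol
        · exfalso
          rw [hG, SimpleGraph.fromRel_adj] at hadj
          exact satCol_notRel f s a ha u z hcol.symm (hadj.2.resolve_right (fun hh => hh))
      calc deficiency G (satCol D f s a) (.inl u)
          ≤ ((satCls D s (satCol D f s a (.inl u))).erase (.inl u)).card := by
            rw [deficiency, ← Set.ncard_coe_finset]
            exact Set.ncard_le_ncard hsub (Finset.finite_toSet _)
        _ ≤ D := by
            rw [Finset.card_erase_of_mem (mem_satCls s f a u _ rfl), satCls_card hD]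
            omega

/-- For `D ≥ 2`: if the 3CNF formula `f` is satisfiable, then `G_D(f)` admits a
`(2n,D)`-coloring. -/
theorem stmt15 {n m : ℕ} (D : ℕ) (hD : 2 ≤ D) (f : CNF3 n m)
    (h : ∃ s : Fin n → Bool, f.Satisfies s) :
    ∃ c : SatVtxD n m D → Fin (2 * n), IsDefColoring (satGraphD f D) D c := by
  obtain ⟨c, hc⟩ := stmt15' D hD f h
  exact ⟨c, hc⟩
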